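/- arXiv:2103.05738 — 3 statements merged into one kernel-verified Lean document; each statement's English description precedes it below -/
import Mathlib

section
/- Let F = {f₁,…,f_t} be functions on ℂˢ with relevant partial derivatives at a zero x̂. A differential functional c (a finite linear combination of the functionals ∂_j[x̂] with multi-indices j) satisfies the closedness condition φ_i(c) ∈ D_{x̂}(F) for all i together with c(F) = {0} if and only if c((x − x̂)^j · f_i(x)) = 0 for every multi-index j ≥ 0 and every i ∈ {1,…,t}. -/
variable {s : ℕ}

/-- One partial derivative in direction `i`. -/
noncomputable def pderivI (i : Fin s) (f : (Fin s → ℂ) → ℂ) : (Fin s → ℂ) → ℂ :=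
  fun x => deriv (fun t => f (Function.update x i t)) (x i)

/-- Iterated partial derivative with multi-index `j : Fin s → ℕ`
(applied in the fixed coordinate order). -/
noncomputable def pdMulti (j : Fin s → ℕ) (f : (Fin s → ℂ) → ℂ) : (Fin s → ℂ) → ℂ :=
  ((List.ofFn fun i : Fin s => (pderivI i)^[j i]).foldr (· ∘ ·) id) f

/-- The scaled partial-derivative functional `∂_j[xh]`. -/
noncomputable def scaledPD (j : Fin s → ℕ) (f : (Fin s → ℂ) → ℂ) (xh : Fin s → ℂ) : ℂ :=
  pdMulti j f xh / (∏ i, ((j i).factorial : ℂ))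

/-- Application of a differential functional, encoded by its finitely many
coefficients `c : (Fin s → ℕ) →₀ ℂ`, to a function `f` at the point `xh`. -/
noncomputable def applyF (xh : Fin s → ℂ) (c : (Fin s → ℕ) →₀ ℂ) (f : (Fin s → ℂ) → ℂ) : ℂ :=
  c.sum fun j cj => cj * scaledPD j f xh

/-- Raising a multi-index by one in coordinate `i`. -/
def raiseIdx (i : Fin s) (j : Fin s → ℕ) : Fin s → ℕ := Function.update j i (j i + 1)

theorem raiseIdx_injective (i : Fin s) : Function.Injective (raiseIdx i) := by
  intro a b h
  funext x
  by_cases hx : x = i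
  · subst hx
    have := congrFun h x
    simp [raiseIdx] at this
    exact this
  · have := congrFun h x
    simpa [raiseIdx, Function.update_of_ne hx] using this

/-- The anti-differentiation operator `φ_i` on functionals:
`(φ_i c)(j) = c(j + e_i)`. -/
noncomputable def phi (i : Fin s) (c : (Fin s → ℕ) →₀ ℂ) : (Fin s → ℕ) →₀ ℂ :=
  Finsupp.comapDomain (raiseIdx i) c ((raiseIdx_injective i).injOn)

/-- The dual subspaces `D^α_{xh}(F)` of Definition 1: `D⁰` is the span of
`∂_{0⋯0}`, and `D^{α+1}` consists of the functionals of differential order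
`≤ α+1` vanishing on the system whose images under every `φ_i` lie in `D^α`. -/
def DSub (t : ℕ) (F : Fin t → ((Fin s → ℂ) → ℂ)) (xh : Fin s → ℂ) :
    ℕ → Set ((Fin s → ℕ) →₀ ℂ)
  | 0 => {c | ∃ a : ℂ, c = Finsupp.single 0 a}
  | (α + 1) => {c | (∀ j ∈ c.support, (∑ i, j i) ≤ α + 1)
      ∧ (∀ i, applyF xh c (F i) = 0)
      ∧ ∀ i : Fin s, phi i c ∈ DSub t F xh α}

/-- The dual space `D_{xh}(F)`: the union of all the dual subspaces. -/
def DualSpace (t : ℕ) (F : Fin t → ((Fin s → ℂ) → ℂ)) (xh : Fin s → ℂ) :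
    Set ((Fin s → ℕ) →₀ ℂ) := ⋃ α : ℕ, DSub t F xh α

/-!
By the Leibniz rule, `∂_j[x̂]((x_i - x̂_i) g) = ∂_{j - e_i}[x̂] g` (and `0` if `j_i = 0`): at `x̂`
only the term differentiating the linear factor survives. Summed against `c`, this says
`c((x_i - x̂_i) g) = (φ_i c)(g)`. So `c` kills all monomial multiples of the `f_i` iff `c` kills
`F` and every `φ_i c` kills all monomial multiples of the `f_i`, which is exactly the recursion
defining `D^α`; induction on `α` gives both directions, the order of `c` bounding `α` in the
converse.
-/

open Function

section PartialDerivatives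

variable {f u v : (Fin s → ℂ) → ℂ}

lemma pderivI_eq_fderiv (hf : Differentiable ℂ f) (k : Fin s) :
    pderivI k f = fun x => fderiv ℂ f x (Pi.single k 1) := by
  funext x
  have h : HasFDerivAt f (fderiv ℂ f x) (update x k (x k)) := by
    rw [update_eq_self]; exact (hf x).hasFDerivAt
  exact (h.comp_hasDerivAt (x k) (hasDerivAt_update x k (x k))).deriv

lemma contDiff_pderivI (hf : ContDiff ℂ ⊤ f) (k : Fin s) : ContDiff ℂ ⊤ (pderivI k f) := by
  rw [pderivI_eq_fderiv (hf.differentiable (by simp))]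
  exact (hf.fderiv_right le_top).clm_apply contDiff_const

lemma contDiff_iterate_pderivI (hf : ContDiff ℂ ⊤ f) (k : Fin s) (n : ℕ) :
    ContDiff ℂ ⊤ ((pderivI k)^[n] f) := by
  induction n with
  | zero => exact hf
  | succ n ih => rw [iterate_succ_apply']; exact contDiff_pderivI ih k

lemma pderivI_const_mul_add (hu : Differentiable ℂ u) (hv : Differentiable ℂ v) (a : ℂ)
    (k : Fin s) :
    pderivI k (fun x => a * u x + v x) = fun x => a * pderivI k u x + pderivI k v x := by
  rw [pderivI_eq_fderiv (f := fun x => a * u x + v x) ((hu.const_mul a).add hv),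
    pderivI_eq_fderiv hu, pderivI_eq_fderiv hv]
  funext x
  rw [fderiv_fun_add ((hu x).const_mul a) (hv x), fderiv_const_mul (hu x)]
  simp

lemma iterate_pderivI_const_mul_add (hu : ContDiff ℂ ⊤ u) (hv : ContDiff ℂ ⊤ v) (a : ℂ)
    (k : Fin s) (n : ℕ) :
    (pderivI k)^[n] (fun x => a * u x + v x)
      = fun x => a * (pderivI k)^[n] u x + (pderivI k)^[n] v x := by
  induction n with
  | zero => rfl
  | succ n ih =>
    simp only [iterate_succ_apply', ih]
    exact pderivI_const_mul_add ((contDiff_iterate_pderivI hu k n).differentiable (by simp))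
      ((contDiff_iterate_pderivI hv k n).differentiable (by simp)) a k

def mulCoord (i : Fin s) (a : ℂ) (f : (Fin s → ℂ) → ℂ) : (Fin s → ℂ) → ℂ :=
  fun x => (x i - a) * f x

lemma contDiff_mulCoord (hf : ContDiff ℂ ⊤ f) (i : Fin s) (a : ℂ) :
    ContDiff ℂ ⊤ (mulCoord i a f) :=
  ((contDiff_apply ℂ ℂ i).sub contDiff_const).mul hf

lemma pderivI_mulCoord (hf : Differentiable ℂ f) (i k : Fin s) (a : ℂ) :
    pderivI k (mulCoord i a f)
      = fun x => (Pi.single k 1 : Fin s → ℂ) i * f x + mulCoord i a (pderivI k f) x := by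
  have hcoord : Differentiable ℂ fun x : Fin s → ℂ => x i - a :=
    (differentiable_apply i).sub_const a
  rw [pderivI_eq_fderiv (f := mulCoord i a f) (hcoord.mul hf), pderivI_eq_fderiv hf]
  funext x
  rw [show mulCoord i a f = fun y => (y i - a) * f y from rfl, fderiv_fun_mul (hcoord x) (hf x),
    fderiv_sub_const, (hasFDerivAt_apply i x).fderiv]
  simp only [add_apply, smul_apply, smul_eq_mul, ContinuousLinearMap.proj_apply, mulCoord]
  ring

lemma iterate_pderivI_mulCoord_of_ne (hf : ContDiff ℂ ⊤ f) {i k : Fin s} (hik : i ≠ k)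
    (a : ℂ) (n : ℕ) :
    (pderivI k)^[n] (mulCoord i a f) = mulCoord i a ((pderivI k)^[n] f) := by
  induction n with
  | zero => rfl
  | succ n ih =>
    rw [iterate_succ_apply', ih, iterate_succ_apply',
      pderivI_mulCoord ((contDiff_iterate_pderivI hf k n).differentiable (by simp))]
    simp [Pi.single_eq_of_ne hik]

-- At `n = 0` the truncated `n - 1` is harmless: its coefficient vanishes.
lemma iterate_pderivI_mulCoord_self (hf : ContDiff ℂ ⊤ f) (i : Fin s) (a : ℂ) (n : ℕ) :
    (pderivI i)^[n] (mulCoord i a f)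
      = fun x => n * (pderivI i)^[n - 1] f x + mulCoord i a ((pderivI i)^[n] f) x := by
  induction n with
  | zero => simp
  | succ n ih =>
    rw [iterate_succ_apply', ih,
      pderivI_const_mul_add ((contDiff_iterate_pderivI hf i _).differentiable (by simp))
        ((contDiff_mulCoord (contDiff_iterate_pderivI hf i n) i a).differentiable (by simp)),
      pderivI_mulCoord ((contDiff_iterate_pderivI hf i n).differentiable (by simp))]
    funext x
    cases n with
    | zero => simp
    | succ m =>
      simp only [Pi.single_eq_same, one_mul, Nat.add_sub_cancel, iterate_succ_apply']
      push_cast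
      ring

end PartialDerivatives

section IteratedPartialDerivatives

variable {f : (Fin s → ℂ) → ℂ}

noncomputable def pdAlong (l : List (Fin s)) (j : Fin s → ℕ) (f : (Fin s → ℂ) → ℂ) :
    (Fin s → ℂ) → ℂ :=
  ((l.map fun k => (pderivI k)^[j k]).foldr (· ∘ ·) id) f

@[simp] lemma pdAlong_nil (j : Fin s → ℕ) (f : (Fin s → ℂ) → ℂ) : pdAlong [] j f = f := rfl

@[simp] lemma pdAlong_cons (k : Fin s) (l : List (Fin s)) (j : Fin s → ℕ)
    (f : (Fin s → ℂ) → ℂ) : pdAlong (k :: l) j f = (pderivI k)^[j k] (pdAlong l j f) := rfl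

lemma pdMulti_eq_pdAlong (j : Fin s → ℕ) (f : (Fin s → ℂ) → ℂ) :
    pdMulti j f = pdAlong (List.finRange s) j f := by
  rw [pdMulti, List.ofFn_eq_map, pdAlong]

lemma pdMulti_zero (f : (Fin s → ℂ) → ℂ) : pdMulti 0 f = f := by
  rw [pdMulti_eq_pdAlong]
  induction List.finRange s with
  | nil => rfl
  | cons k l ih => simpa using ih

lemma contDiff_pdAlong (hf : ContDiff ℂ ⊤ f) (l : List (Fin s)) (j : Fin s → ℕ) :
    ContDiff ℂ ⊤ (pdAlong l j f) := by
  induction l with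
  | nil => exact hf
  | cons k l ih => exact contDiff_iterate_pderivI ih k (j k)

lemma pdAlong_congr {l : List (Fin s)} {j j' : Fin s → ℕ} (h : ∀ k ∈ l, j k = j' k) :
    pdAlong l j f = pdAlong l j' f := by
  rw [pdAlong, pdAlong, List.map_congr_left fun k hk => by rw [h k hk]]

lemma pdAlong_mulCoord_of_notMem (hf : ContDiff ℂ ⊤ f) {i : Fin s} {l : List (Fin s)}
    (hi : i ∉ l) (j : Fin s → ℕ) (a : ℂ) :
    pdAlong l j (mulCoord i a f) = mulCoord i a (pdAlong l j f) := by
  induction l with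
  | nil => rfl
  | cons k l ih =>
    rw [List.mem_cons, not_or] at hi
    rw [pdAlong_cons, ih hi.2,
      iterate_pderivI_mulCoord_of_ne (contDiff_pdAlong hf l j) hi.1, pdAlong_cons]

lemma pdAlong_mulCoord_of_mem (hf : ContDiff ℂ ⊤ f) {i : Fin s} {l : List (Fin s)}
    (hl : l.Nodup) (hi : i ∈ l) (j : Fin s → ℕ) (a : ℂ) :
    pdAlong l j (mulCoord i a f) = fun x =>
      j i * pdAlong l (update j i (j i - 1)) f x + mulCoord i a (pdAlong l j f) x := by
  induction l with
  | nil => simp at hi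
  | cons k l ih =>
    rw [List.nodup_cons] at hl
    obtain rfl | hik := eq_or_ne i k
    · have hlower : pdAlong l (update j i (j i - 1)) f = pdAlong l j f :=
        pdAlong_congr fun k hk => update_of_ne (ne_of_mem_of_not_mem hk hl.1) _ _
      rw [pdAlong_cons, pdAlong_mulCoord_of_notMem hf hl.1,
        iterate_pderivI_mulCoord_self (contDiff_pdAlong hf l j), pdAlong_cons, hlower,
        update_self]
      rfl
    · have hi' : i ∈ l := (List.mem_cons.mp hi).resolve_left hik
      rw [pdAlong_cons, ih hl.2 hi',
        iterate_pderivI_const_mul_add (contDiff_pdAlong hf l _)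
          (contDiff_mulCoord (contDiff_pdAlong hf l j) i a),
        iterate_pderivI_mulCoord_of_ne (contDiff_pdAlong hf l j) hik, pdAlong_cons,
        pdAlong_cons, update_of_ne hik.symm]

lemma pdMulti_mulCoord_apply (hf : ContDiff ℂ ⊤ f) (i : Fin s) (xh : Fin s → ℂ)
    (j : Fin s → ℕ) :
    pdMulti j (mulCoord i (xh i) f) xh = j i * pdMulti (update j i (j i - 1)) f xh := by
  rw [pdMulti_eq_pdAlong, pdMulti_eq_pdAlong,
    pdAlong_mulCoord_of_mem hf (List.nodup_finRange s) (List.mem_finRange i)]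
  simp [mulCoord]

end IteratedPartialDerivatives

section Functionals

variable {f : (Fin s → ℂ) → ℂ}

@[simp] lemma raiseIdx_self (i : Fin s) (j : Fin s → ℕ) : raiseIdx i j i = j i + 1 :=
  update_self ..

lemma exists_raiseIdx_eq {i : Fin s} {j : Fin s → ℕ} (hj : j i ≠ 0) :
    ∃ j', raiseIdx i j' = j :=
  ⟨update j i (j i - 1), by
    rw [raiseIdx, update_idem, update_self, Nat.sub_add_cancel (Nat.pos_of_ne_zero hj),
      update_eq_self]⟩

lemma sum_raiseIdx (i : Fin s) (j : Fin s → ℕ) : ∑ k, raiseIdx i j k = (∑ k, j k) + 1 := by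
  rw [Fintype.sum_eq_add_sum_compl i, Fintype.sum_eq_add_sum_compl i j, raiseIdx_self,
    Finset.sum_congr rfl fun k hk => by rw [raiseIdx, update_of_ne (by simpa using hk)]]
  ring

lemma prod_factorial_raiseIdx (i : Fin s) (j : Fin s → ℕ) :
    ∏ k, ((raiseIdx i j k).factorial : ℂ) = (j i + 1) * ∏ k, ((j k).factorial : ℂ) := by
  rw [Fintype.prod_eq_mul_prod_compl i, Fintype.prod_eq_mul_prod_compl i (fun k => _),
    raiseIdx_self, Finset.prod_congr rfl fun k hk => by
      rw [raiseIdx, update_of_ne (by simpa using hk)], Nat.factorial_succ]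
  push_cast
  ring

lemma applyF_single_zero (xh : Fin s → ℂ) (a : ℂ) (f : (Fin s → ℂ) → ℂ) :
    applyF xh (Finsupp.single 0 a) f = a * f xh := by
  simp [applyF, scaledPD, pdMulti_zero]

lemma scaledPD_mulCoord_of_eq_zero (hf : ContDiff ℂ ⊤ f) (xh : Fin s → ℂ) {i : Fin s}
    {j : Fin s → ℕ} (hj : j i = 0) : scaledPD j (mulCoord i (xh i) f) xh = 0 := by
  rw [scaledPD, pdMulti_mulCoord_apply hf, hj]
  simp

lemma scaledPD_raiseIdx_mulCoord (hf : ContDiff ℂ ⊤ f) (xh : Fin s → ℂ) (i : Fin s)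
    (j : Fin s → ℕ) : scaledPD (raiseIdx i j) (mulCoord i (xh i) f) xh = scaledPD j f xh := by
  have hlower : update (raiseIdx i j) i (raiseIdx i j i - 1) = j := by
    rw [raiseIdx, update_idem, update_self, Nat.add_sub_cancel, update_eq_self]
  have hfact : ∏ k, ((j k).factorial : ℂ) ≠ 0 :=
    Finset.prod_ne_zero_iff.mpr fun k _ => Nat.cast_ne_zero.mpr (j k).factorial_ne_zero
  rw [scaledPD, scaledPD, pdMulti_mulCoord_apply hf, hlower, prod_factorial_raiseIdx,
    raiseIdx_self]
  push_cast
  field_simp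

lemma applyF_mulCoord (hf : ContDiff ℂ ⊤ f) (xh : Fin s → ℂ) (c : (Fin s → ℕ) →₀ ℂ)
    (i : Fin s) : applyF xh c (mulCoord i (xh i) f) = applyF xh (phi i c) f := by
  rw [applyF, applyF, Finsupp.sum, Finsupp.sum]
  calc ∑ j ∈ c.support, c j * scaledPD j (mulCoord i (xh i) f) xh
      = ∑ j ∈ c.support.preimage (raiseIdx i) (raiseIdx_injective i).injOn,
          c (raiseIdx i j) * scaledPD (raiseIdx i j) (mulCoord i (xh i) f) xh := by
        refine (Finset.sum_preimage _ _ _ _ fun j _ hj => ?_).symm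
        have hji : j i = 0 := by
          by_contra hne
          exact hj (exists_raiseIdx_eq hne)
        simp [scaledPD_mulCoord_of_eq_zero hf xh hji]
    _ = ∑ j ∈ (phi i c).support, phi i c j * scaledPD j f xh := by
        refine Finset.sum_congr rfl fun j _ => ?_
        rw [phi, Finsupp.comapDomain_apply, scaledPD_raiseIdx_mulCoord hf]

end Functionals

section DualSpace

variable {t : ℕ} {F : Fin t → ((Fin s → ℂ) → ℂ)} {xh : Fin s → ℂ} {f : (Fin s → ℂ) → ℂ}

def monoMul (xh : Fin s → ℂ) (j : Fin s → ℕ) (f : (Fin s → ℂ) → ℂ) : (Fin s → ℂ) → ℂ :=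
  fun x => (∏ k, (x k - xh k) ^ (j k)) * f x

@[simp] lemma monoMul_zero (xh : Fin s → ℂ) (f : (Fin s → ℂ) → ℂ) : monoMul xh 0 f = f := by
  funext x
  simp [monoMul]

lemma monoMul_raiseIdx (xh : Fin s → ℂ) (i : Fin s) (j : Fin s → ℕ) (f : (Fin s → ℂ) → ℂ) :
    monoMul xh (raiseIdx i j) f = mulCoord i (xh i) (monoMul xh j f) := by
  funext x
  simp only [monoMul, mulCoord]
  rw [Fintype.prod_eq_mul_prod_compl i, Fintype.prod_eq_mul_prod_compl i (fun k => _),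
    raiseIdx_self, Finset.prod_congr rfl fun k hk => by
      rw [raiseIdx, update_of_ne (by simpa using hk)]]
  ring

lemma contDiff_monoMul (hf : ContDiff ℂ ⊤ f) (xh : Fin s → ℂ) (j : Fin s → ℕ) :
    ContDiff ℂ ⊤ (monoMul xh j f) :=
  (contDiff_prod fun k _ =>
    ((contDiff_apply ℂ ℂ k).sub contDiff_const).pow (j k)).mul hf

def AnnihilatesMonomialMultiples (xh : Fin s → ℂ) (F : Fin t → ((Fin s → ℂ) → ℂ))
    (c : (Fin s → ℕ) →₀ ℂ) : Prop :=
  ∀ (j : Fin s → ℕ) (i : Fin t), applyF xh c (monoMul xh j (F i)) = 0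

lemma annihilatesMonomialMultiples_iff (hF : ∀ i, ContDiff ℂ ⊤ (F i)) (c : (Fin s → ℕ) →₀ ℂ) :
    AnnihilatesMonomialMultiples xh F c ↔
      (∀ i, applyF xh c (F i) = 0) ∧ ∀ k, AnnihilatesMonomialMultiples xh F (phi k c) := by
  have hphi : ∀ k j i, applyF xh (phi k c) (monoMul xh j (F i))
      = applyF xh c (monoMul xh (raiseIdx k j) (F i)) := fun k j i => by
    rw [monoMul_raiseIdx, applyF_mulCoord (contDiff_monoMul (hF i) xh j)]
  constructor
  · intro h
    exact ⟨fun i => by simpa using h 0 i, fun k j i => (hphi k j i).trans (h _ i)⟩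
  · rintro ⟨hF0, hphi0⟩ j i
    by_cases hj : j = 0
    · simpa [hj] using hF0 i
    · obtain ⟨k, hk⟩ := Function.ne_iff.mp hj
      obtain ⟨j', rfl⟩ := exists_raiseIdx_eq hk
      exact (hphi k j' i).symm.trans (hphi0 k j' i)

lemma annihilatesMonomialMultiples_of_mem_DSub (hF : ∀ i, ContDiff ℂ ⊤ (F i))
    (hzero : ∀ i, F i xh = 0) {α : ℕ} {c : (Fin s → ℕ) →₀ ℂ} (hc : c ∈ DSub t F xh α) :
    AnnihilatesMonomialMultiples xh F c := by
  induction α generalizing c with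
  | zero =>
    obtain ⟨a, rfl⟩ := hc
    intro j i
    simp [applyF_single_zero, monoMul, hzero i]
  | succ α ih =>
    obtain ⟨-, hcF, hphi⟩ := hc
    exact (annihilatesMonomialMultiples_iff hF c).mpr ⟨hcF, fun k => ih (hphi k)⟩

lemma phi_support_sum_le {c : (Fin s → ℕ) →₀ ℂ} {α : ℕ}
    (hc : ∀ j ∈ c.support, ∑ k, j k ≤ α + 1) (i : Fin s) :
    ∀ j ∈ (phi i c).support, ∑ k, j k ≤ α := by
  intro j hj
  have hraise : raiseIdx i j ∈ c.support := by
    simpa [phi, Finsupp.comapDomain_apply] using hj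
  have := hc _ hraise
  rw [sum_raiseIdx] at this
  omega

lemma eq_single_zero_of_support_sum_le_zero {c : (Fin s → ℕ) →₀ ℂ}
    (hc : ∀ j ∈ c.support, ∑ k, j k ≤ 0) : ∃ a, c = Finsupp.single 0 a := by
  refine Finsupp.support_subset_singleton'.mp fun j hj => Finset.mem_singleton.mpr ?_
  funext k
  exact Finset.sum_eq_zero_iff.mp (Nat.le_zero.mp (hc j hj)) k (Finset.mem_univ k)

lemma mem_DSub_of_annihilatesMonomialMultiples (hF : ∀ i, ContDiff ℂ ⊤ (F i)) {α : ℕ}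
    {c : (Fin s → ℕ) →₀ ℂ} (hdeg : ∀ j ∈ c.support, ∑ k, j k ≤ α)
    (hc : AnnihilatesMonomialMultiples xh F c) : c ∈ DSub t F xh α := by
  induction α generalizing c with
  | zero => exact eq_single_zero_of_support_sum_le_zero hdeg
  | succ α ih =>
    obtain ⟨hcF, hphi⟩ := (annihilatesMonomialMultiples_iff hF c).mp hc
    exact ⟨hdeg, hcF, fun k => ih (phi_support_sum_le hdeg k) (hphi k)⟩

end DualSpace

/-- Lemma 1: a differential functional `c` lies in the dual space
`D_{x̂}(F)` (i.e. it vanishes on `F` and satisfies the closedness condition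
`φ_i(c) ∈ D_{x̂}(F)` for all `i`) if and only if `c((x - x̂)^j · f_i) = 0`
for every multi-index `j ≥ 0` and every `i`. -/
theorem stmt3 {s t : ℕ} (F : Fin t → ((Fin s → ℂ) → ℂ)) (xh : Fin s → ℂ)
    (hsmooth : ∀ i, ContDiff ℂ ⊤ (F i))
    (hzero : ∀ i, F i xh = 0)
    (c : (Fin s → ℕ) →₀ ℂ) :
    c ∈ DualSpace t F xh ↔
      ∀ (j : Fin s → ℕ) (i : Fin t),
        applyF xh c (fun x => (∏ k, (x k - xh k) ^ (j k)) * F i x) = 0 := by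
  constructor
  · intro hc
    obtain ⟨α, hα⟩ := Set.mem_iUnion.mp hc
    exact annihilatesMonomialMultiples_of_mem_DSub hsmooth hzero hα
  · intro hc
    exact Set.mem_iUnion.mpr ⟨_, mem_DSub_of_annihilatesMonomialMultiples hsmooth
      (fun j hj => Finset.le_sup (f := fun j => ∑ k, j k) hj) hc⟩
end

section
/- Let f : ℂˢ → ℂᵗ (or ℝˢ → ℝᵗ) be twice continuously differentiable in a neighborhood of x̂, and suppose the Jacobian J(x̂) is injective. Then there exist constants C > 0 and a neighborhood U of x̂ such that for all x̃ ∈ U, ‖x̃ − x̂‖ ≤ ‖J(x̂)⁺‖·‖f(x̃) − f(x̂)‖ + C·‖f(x̃) − f(x̂)‖², where J(x̂)⁺ is the Moore–Penrose pseudo-inverse of J(x̂). -/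
open ContinuousLinearMap

/-- The Moore–Penrose pseudo-inverse `J⁺ = (JᴴJ)⁻¹Jᴴ` of an injective linear map
between finite-dimensional inner product spaces (here `Ring.inverse` returns the
genuine inverse since `JᴴJ` is invertible for injective `J`). -/
noncomputable def pseudoInv {s t : ℕ}
    (J : EuclideanSpace ℝ (Fin s) →L[ℝ] EuclideanSpace ℝ (Fin t)) :
    EuclideanSpace ℝ (Fin t) →L[ℝ] EuclideanSpace ℝ (Fin s) :=
  (Ring.inverse ((adjoint J).comp J)).comp (adjoint J)

/-!
Write `r = ‖x̃ - x̂‖`, `m = ‖f x̃ - f x̂‖` and `p = ‖J⁺‖`. Since `J⁺ J = 1`, `r ≤ p ‖J (x̃ - x̂)‖`,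
and Taylor's theorem gives `‖J (x̃ - x̂)‖ ≤ m + k r²`. Close to `x̂` the quadratic term `p k r²`
is at most `r / 2`, so first `r ≤ 2 p m`, and feeding this back into `p k r²` gives
`r ≤ p m + 4 k p³ m²`.
-/

open Filter Topology Asymptotics Metric

theorem isUnit_adjoint_comp_self {𝕜 E F : Type*} [RCLike 𝕜] [NormedAddCommGroup E]
    [InnerProductSpace 𝕜 E] [NormedAddCommGroup F] [InnerProductSpace 𝕜 F] [CompleteSpace E]
    [CompleteSpace F] [FiniteDimensional 𝕜 E] {J : E →L[𝕜] F} (hJ : Function.Injective J) :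
    IsUnit (adjoint J ∘L J) := by
  have hinj : Function.Injective (adjoint J ∘L J) := (adjoint_comp_self_injective_iff J).2 hJ
  exact isUnit_iff_bijective.2 ⟨hinj, LinearMap.injective_iff_surjective.1 hinj⟩

theorem pseudoInv_apply_apply {s t : ℕ}
    {J : EuclideanSpace ℝ (Fin s) →L[ℝ] EuclideanSpace ℝ (Fin t)} (hJ : Function.Injective J)
    (v : EuclideanSpace ℝ (Fin s)) : pseudoInv J (J v) = v :=
  congr($(Ring.inverse_mul_cancel _ (isUnit_adjoint_comp_self hJ)) v)

theorem norm_le_norm_pseudoInv_mul {s t : ℕ}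
    {J : EuclideanSpace ℝ (Fin s) →L[ℝ] EuclideanSpace ℝ (Fin t)} (hJ : Function.Injective J)
    (v : EuclideanSpace ℝ (Fin s)) : ‖v‖ ≤ ‖pseudoInv J‖ * ‖J v‖ := by
  simpa only [pseudoInv_apply_apply hJ] using (pseudoInv J).le_opNorm (J v)

theorem ContDiffAt.isBigO_sub_sub_fderiv_sq {E F : Type*}
    [NormedAddCommGroup E] [NormedSpace ℝ E] [NormedAddCommGroup F] [NormedSpace ℝ F]
    {f : E → F} {x₀ : E} (hf : ContDiffAt ℝ 2 f x₀) :
    (fun x => f x - f x₀ - fderiv ℝ f x₀ (x - x₀)) =O[𝓝 x₀] fun x => ‖x - x₀‖ ^ 2 := by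
  obtain ⟨K, t, ht, hlip⟩ := (hf.fderiv_right one_add_one_eq_two.le).exists_lipschitzOnWith
  have hdiff : ∀ᶠ y in 𝓝 x₀, DifferentiableAt ℝ f y :=
    (hf.eventually (by simp)).mono fun y hy => hy.differentiableAt (by norm_num)
  obtain ⟨ε, hε, hball⟩ := Metric.mem_nhds_iff.mp (inter_mem ht hdiff)
  refine .of_bound K (eventually_of_mem (ball_mem_nhds x₀ hε) fun x hx => ?_)
  set r := ‖x - x₀‖
  have hsub : closedBall x₀ r ⊆ t ∩ {y | DifferentiableAt ℝ f y} :=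
    (closedBall_subset_ball (by rwa [mem_ball, dist_eq_norm] at hx)).trans hball
  have hbound : ∀ y ∈ closedBall x₀ r, ‖fderiv ℝ f y - fderiv ℝ f x₀‖ ≤ K * r := fun y hy =>
    (hlip.norm_sub_le (hsub hy).1 (mem_of_mem_nhds ht)).trans
      (by gcongr; rwa [mem_closedBall, dist_eq_norm] at hy)
  calc _ ≤ K * r * r := (convex_closedBall x₀ r).norm_image_sub_le_of_norm_fderiv_le'
        (fun y hy => (hsub hy).2) hbound (mem_closedBall_self (norm_nonneg _))
        (by rw [mem_closedBall, dist_eq_norm])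
    _ = K * ‖r ^ 2‖ := by rw [norm_pow, norm_norm]; ring

theorem le_mul_add_mul_sq_of_le_mul_add_sq {r m p k : ℝ} (hr : 0 ≤ r) (hp : 0 ≤ p)
    (hk : 0 ≤ k) (h : r ≤ p * (m + k * r ^ 2)) (hsmall : p * k * r ≤ 1 / 2) :
    r ≤ p * m + 4 * k * p ^ 3 * m ^ 2 := by
  have hr_le : r ≤ 2 * p * m := by nlinarith
  calc r ≤ p * m + p * k * r ^ 2 := by linarith
    _ ≤ p * m + p * k * (2 * p * m) ^ 2 := by gcongr
    _ = p * m + 4 * k * p ^ 3 * m ^ 2 := by ring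

theorem eventually_norm_sub_le_of_isBigO_sq {E F : Type*} [SeminormedAddCommGroup E]
    [SeminormedAddCommGroup F] {f J : E → F} {x₀ : E} {p : ℝ} (hp : 0 ≤ p)
    (hJ : ∀ v, ‖v‖ ≤ p * ‖J v‖)
    (hf : (fun x => f x - f x₀ - J (x - x₀)) =O[𝓝 x₀] fun x => ‖x - x₀‖ ^ 2) :
    ∃ C > 0, ∀ᶠ x in 𝓝 x₀, ‖x - x₀‖ ≤ p * ‖f x - f x₀‖ + C * ‖f x - f x₀‖ ^ 2 := by
  obtain ⟨k, hk, hR⟩ := hf.exists_pos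
  have hsmall : ∀ᶠ x in 𝓝 x₀, p * k * ‖x - x₀‖ ≤ 1 / 2 := by
    have := (tendsto_norm_sub_self x₀).const_mul (p * k)
    rw [mul_zero] at this
    exact this.eventually (ge_mem_nhds one_half_pos)
  refine ⟨4 * k * p ^ 3 + 1, by positivity, ?_⟩
  filter_upwards [hR.bound, hsmall] with x hRx hx
  rw [norm_pow, norm_norm] at hRx
  have hJx : ‖J (x - x₀)‖ ≤ ‖f x - f x₀‖ + k * ‖x - x₀‖ ^ 2 := by
    simpa using (norm_sub_le (f x - f x₀) (f x - f x₀ - J (x - x₀))).trans (by gcongr)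
  have := le_mul_add_mul_sq_of_le_mul_add_sq (norm_nonneg _) hp hk.le
    ((hJ _).trans (by gcongr)) hx
  nlinarith [sq_nonneg ‖f x - f x₀‖]

/-- Lemma 6: if `f` is twice continuously differentiable near `x̂`
and its Jacobian `J(x̂)` is injective, then
`‖x̃ - x̂‖ ≤ ‖J(x̂)⁺‖·‖f(x̃) - f(x̂)‖ + C·‖f(x̃) - f(x̂)‖²`
for all `x̃` in some neighborhood of `x̂`. -/
theorem stmt8 {s t : ℕ}
    (f : EuclideanSpace ℝ (Fin s) → EuclideanSpace ℝ (Fin t))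
    (xh : EuclideanSpace ℝ (Fin s))
    (U₀ : Set (EuclideanSpace ℝ (Fin s))) (hU₀ : U₀ ∈ nhds xh)
    (hf : ContDiffOn ℝ 2 f U₀)
    (hinj : Function.Injective (fderiv ℝ f xh)) :
    ∃ C > (0 : ℝ), ∃ U ∈ nhds xh, ∀ x ∈ U,
      ‖x - xh‖ ≤ ‖pseudoInv (fderiv ℝ f xh)‖ * ‖f x - f xh‖ + C * ‖f x - f xh‖ ^ 2 := by
  obtain ⟨C, hC, hU⟩ := eventually_norm_sub_le_of_isBigO_sq (norm_nonneg _)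
    (norm_le_norm_pseudoInv_mul hinj) (hf.contDiffAt hU₀).isBigO_sub_sub_fderiv_sq
  exact ⟨C, hC, _, hU, fun _ hx => hx⟩
end

section
/- Let f : ℂˢ → ℂᵗ have Jacobian J₀ at the isolated multiple zero x̂₁ with nullity(J₀(x̂₁)) = 1 (breadth one), and let b ∈ ℂˢ with the stacked matrix [J₀(x̂₁); bᴴ] invertible in column rank. Suppose (v₁, v₂) is a nonzero solution of J₁(x̂₁, x̂₂)(v₁, v₂) = 0, where J₁ is the Jacobian of the deflated system g₁(x₁,x₂) = (f(x₁), J₀(x₁)x₂, bᴴx₂ − 1) and x̂₂ is the unique solution of J₀(x̂₁)x₂ = 0, bᴴx₂ = 1. Then v₁ ≠ 0; in fact v₁ is a nonzero scalar multiple of x̂₂. -/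
/-- breadth-one deflation.  Let `J₀` be the Jacobian of `f` with
one-dimensional kernel at the zero `x̂₁`, let `x̂₂` be the unique solution of
`J₀(x̂₁)x₂ = 0, bᴴx₂ = 1`, and let `(v₁, v₂) ≠ 0` be a kernel vector of the
Jacobian `J₁(x̂₁, x̂₂)` of the deflated system
`g₁(x₁,x₂) = (f(x₁), J₀(x₁)x₂, bᴴx₂ - 1)`.  Then `v₁` is a nonzero scalar
multiple of `x̂₂`; in particular `v₁ ≠ 0`. -/
theorem stmt16 {s t : ℕ}
    (f : (Fin s → ℂ) → (Fin t → ℂ)) (hf : ContDiff ℂ ⊤ f)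
    (J₀ : (Fin s → ℂ) → Matrix (Fin t) (Fin s) ℂ)
    (hJ₀ : ∀ x i j, J₀ x i j = fderiv ℂ (fun y => f y i) x (Pi.single j 1))
    (xh₁ : Fin s → ℂ) (hzero : f xh₁ = 0)
    (hbreadth : Module.finrank ℂ (LinearMap.ker (J₀ xh₁).mulVecLin) = 1)
    (b : Fin s → ℂ)
    (hstack : Function.Injective
      (fun v : Fin s → ℂ => ((J₀ xh₁).mulVec v, ∑ i, star (b i) * v i)))
    (xh₂ : Fin s → ℂ)
    (hx₂ker : (J₀ xh₁).mulVec xh₂ = 0)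
    (hx₂b : ∑ i, star (b i) * xh₂ i = 1)
    (v₁ v₂ : Fin s → ℂ)
    (hv : (J₀ xh₁).mulVec v₁ = 0
      ∧ fderiv ℂ (fun y => (J₀ y).mulVec xh₂) xh₁ v₁ + (J₀ xh₁).mulVec v₂ = 0
      ∧ ∑ i, star (b i) * v₂ i = 0)
    (hnz : ¬(v₁ = 0 ∧ v₂ = 0)) :
    v₁ ≠ 0 ∧ ∃ γ : ℂ, γ ≠ 0 ∧ v₁ = γ • xh₂ := by
  obtain ⟨hv1, hv2, hv3⟩ := hv
  -- x̂₂ is a nonzero element of the kernel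
  have hx₂ne : xh₂ ≠ 0 := by
    intro h
    rw [h] at hx₂b
    simp at hx₂b
  have hx₂mem : xh₂ ∈ LinearMap.ker (J₀ xh₁).mulVecLin := by
    simpa [Matrix.mulVecLin] using hx₂ker
  have hv₁mem : v₁ ∈ LinearMap.ker (J₀ xh₁).mulVecLin := by
    simpa [Matrix.mulVecLin] using hv1
  -- kernel is one-dimensional, so v₁ = γ • x̂₂
  have hK : ∀ w : LinearMap.ker (J₀ xh₁).mulVecLin, ∃ c : ℂ,
      c • (⟨xh₂, hx₂mem⟩ : LinearMap.ker (J₀ xh₁).mulVecLin) = w := by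
    rw [← finrank_eq_one_iff_of_nonzero' (⟨xh₂, hx₂mem⟩ :
      LinearMap.ker (J₀ xh₁).mulVecLin) (by simpa using hx₂ne)]
    exact hbreadth
  obtain ⟨γ, hγ⟩ := hK ⟨v₁, hv₁mem⟩
  have hγ' : γ • xh₂ = v₁ := congrArg Subtype.val hγ
  -- γ ≠ 0, else v₂ is killed by the injective stacked map
  have hγne : γ ≠ 0 := by
    intro h0
    rw [h0, zero_smul] at hγ'
    have hv₁0 : v₁ = 0 := hγ'.symm
    have hd : fderiv ℂ (fun y => (J₀ y).mulVec xh₂) xh₁ v₁ = 0 := by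
      rw [hv₁0]; exact (fderiv ℂ (fun y => (J₀ y).mulVec xh₂) xh₁).map_zero
    rw [hd, zero_add] at hv2
    have : v₂ = 0 := by
      apply hstack
      simp only [Matrix.mulVec_zero, Prod.mk.injEq]
      exact ⟨hv2, by simpa using hv3⟩
    exact hnz ⟨hv₁0, this⟩
  have hv₁ne : v₁ ≠ 0 := by
    rw [← hγ']
    exact smul_ne_zero hγne hx₂ne
  exact ⟨hv₁ne, γ, hγne, hγ'.symm⟩
end
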